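/- The double Gaussian integral of the Gaussian kernel satisfies ∫_{ℝ^d} ∫_{ℝ^d} exp(−σ‖x−y‖²) dN(m,Σ)(x) dN(m,Σ)(y) = det(I_d + 4σΣ)^{−1/2}. -/

import Mathlib

open MeasureTheory Matrix Real
open scoped NNReal ENNReal

/-- The Gaussian probability measure `N(m, Σ)` on `ℝ^d`, given by its density
`(2π)^{-d/2} det(Σ)^{-1/2} exp(-(x-m)ᵀ Σ⁻¹ (x-m) / 2)` with respect to Lebesgue measure. -/
noncomputable def gaussN {d : ℕ} (m : Fin d → ℝ) (S : Matrix (Fin d) (Fin d) ℝ) :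
    Measure (Fin d → ℝ) :=
  MeasureTheory.volume.withDensity fun x =>
    ENNReal.ofReal ((2 * π) ^ (-(d : ℝ) / 2) * S.det ^ (-(1 : ℝ) / 2) *
      Real.exp (-((x - m) ⬝ᵥ (S⁻¹ *ᵥ (x - m))) / 2))

lemma integral_exp_quad_one {a : ℝ} (ha : 0 < a) (c : ℝ) :
    ∫ x : ℝ, Real.exp (-(a/2) * x^2 + c * x) = Real.sqrt (2*π/a) * Real.exp (c^2/(2*a)) := by
  have hb : ((-(a/2) : ℂ)).re < 0 := by simpa using by positivity
  have key := integral_cexp_quadratic (b := (-(a/2) : ℂ)) hb (c : ℂ) 0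
  have hl : (∫ x : ℝ, Complex.exp ((-(a/2) : ℂ) * (x:ℂ) ^ 2 + (c:ℂ) * (x:ℂ) + 0))
      = ((∫ x : ℝ, Real.exp (-(a/2) * x^2 + c * x) : ℝ) : ℂ) := by
    have h : ∀ x : ℝ, Complex.exp ((-(a/2) : ℂ) * (x:ℂ) ^ 2 + (c:ℂ) * (x:ℂ) + 0)
        = ((Real.exp (-(a/2) * x^2 + c * x) : ℝ) : ℂ) := by
      intro x; push_cast [Complex.ofReal_exp]; ring_nf
    simp_rw [h]
    exact integral_ofReal
  have hr : ((π : ℂ) / -(-(a/2) : ℂ)) ^ (1/2 : ℂ) * Complex.exp (0 - (c:ℂ)^2 / (4 * (-(a/2) : ℂ)))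
      = ((Real.sqrt (2*π/a) * Real.exp (c^2/(2*a)) : ℝ) : ℂ) := by
    have h1 : ((π : ℂ) / -(-(a/2) : ℂ)) = ((2*π/a : ℝ) : ℂ) := by
      push_cast; field_simp
    have h2 : (0 - (c:ℂ)^2 / (4 * (-(a/2) : ℂ))) = ((c^2/(2*a) : ℝ) : ℂ) := by
      push_cast; field_simp; ring
    rw [h1, h2, show (1/2 : ℂ) = ((1/2 : ℝ) : ℂ) by norm_num,
      ← Complex.ofReal_cpow (by positivity), ← Complex.ofReal_exp, ← Complex.ofReal_mul]
    norm_num [Real.sqrt_eq_rpow]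
  rw [hl, hr] at key
  exact_mod_cast key

lemma integral_comp_mulVec {d : ℕ} (U : Matrix (Fin d) (Fin d) ℝ) (hdet : |U.det| = 1)
    (f : (Fin d → ℝ) → ℝ) :
    ∫ x : Fin d → ℝ, f x = ∫ v : Fin d → ℝ, f (U *ᵥ v) := by
  have hd0 : U.det ≠ 0 := fun h => by simp [h] at hdet
  have hmap : Measure.map (Matrix.toLin' U) volume = volume := by
    rw [Real.map_matrix_volume_pi_eq_smul_volume_pi hd0, abs_inv, hdet]
    simp
  let L : (Fin d → ℝ) ≃ₗ[ℝ] (Fin d → ℝ) :=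
    LinearEquiv.ofLinear (Matrix.toLin' U) (Matrix.toLin' U⁻¹)
      (by rw [← Matrix.toLin'_mul, Matrix.mul_nonsing_inv _ (isUnit_iff_ne_zero.mpr hd0),
        Matrix.toLin'_one])
      (by rw [← Matrix.toLin'_mul, Matrix.nonsing_inv_mul _ (isUnit_iff_ne_zero.mpr hd0),
        Matrix.toLin'_one])
  let e : (Fin d → ℝ) ≃ᵐ (Fin d → ℝ) :=
    (L.toContinuousLinearEquivOfContinuous
      (LinearMap.continuous_of_finiteDimensional _)).toHomeomorph.toMeasurableEquiv
  have hL : ⇑e = fun v => U *ᵥ v := by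
    ext v
    simp [e, L, Matrix.toLin'_apply]
  have hmp : MeasurePreserving e volume volume := by
    refine ⟨e.measurable, ?_⟩
    rw [show ⇑e = ⇑(Matrix.toLin' U) from hL.trans (by ext v; simp [Matrix.toLin'_apply])]
    exact hmap
  rw [← hmp.integral_comp' f, hL]

lemma finset_prod_sqrt {ι : Type*} (s : Finset ι) (f : ι → ℝ) (h : ∀ i ∈ s, 0 ≤ f i) :
    ∏ i ∈ s, Real.sqrt (f i) = Real.sqrt (∏ i ∈ s, f i) := by
  induction s using Finset.cons_induction with
  | empty => simp
  | cons a s ha ih =>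
    rw [Finset.prod_cons, Finset.prod_cons, ih fun i hi => h i (Finset.mem_cons_of_mem hi),
      Real.sqrt_mul (h a (Finset.mem_cons_self a s))]

lemma one_dim {lam σ : ℝ} (hlam : 0 < lam) (hσ : 0 < σ) :
    ∫ w : ℝ, Real.exp (-(w^2)/(2*lam)) *
      (∫ u : ℝ, Real.exp (-(u^2)/(2*lam)) * Real.exp (-σ*(u-w)^2)) =
      2*π*lam / Real.sqrt (1+4*σ*lam) := by
  set a : ℝ := 1/lam + 2*σ with ha_def
  have ha : 0 < a := by positivity
  have ha2 : 2*σ < a := by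
    rw [ha_def]; nlinarith [one_div_pos.mpr hlam]
  set a' : ℝ := a - 4*σ^2/a with ha'_def
  have ha' : 0 < a' := by
    rw [ha'_def, sub_pos, div_lt_iff₀ ha]
    nlinarith
  have hinner : ∀ w : ℝ, (∫ u : ℝ, Real.exp (-(u^2)/(2*lam)) * Real.exp (-σ*(u-w)^2)) =
      Real.sqrt (2*π/a) * Real.exp ((2*σ*w)^2/(2*a)) * Real.exp (-σ*w^2) := by
    intro w
    have h : ∀ u : ℝ, Real.exp (-(u^2)/(2*lam)) * Real.exp (-σ*(u-w)^2) =
        Real.exp (-(a/2) * u^2 + (2*σ*w) * u) * Real.exp (-σ*w^2) := by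
      intro u
      rw [← Real.exp_add, ← Real.exp_add]
      congr 1
      rw [ha_def]
      field_simp
      ring
    simp_rw [h]
    rw [integral_mul_const, integral_exp_quad_one ha]
  simp_rw [hinner]
  have h2 : ∀ w : ℝ, Real.exp (-(w^2)/(2*lam)) *
      (Real.sqrt (2*π/a) * Real.exp ((2*σ*w)^2/(2*a)) * Real.exp (-σ*w^2)) =
      Real.sqrt (2*π/a) * Real.exp (-(a'/2) * w^2 + 0 * w) := by
    intro w
    have e : Real.exp (-(w^2)/(2*lam)) *
        (Real.sqrt (2*π/a) * Real.exp ((2*σ*w)^2/(2*a)) * Real.exp (-σ*w^2)) =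
        Real.sqrt (2*π/a) * Real.exp (-(w^2)/(2*lam) + ((2*σ*w)^2/(2*a) + (-σ*w^2))) := by
      rw [Real.exp_add, Real.exp_add]; ring
    rw [e]
    congr 1
    rw [ha'_def, ha_def]
    field_simp
    ring
  simp_rw [h2]
  rw [integral_const_mul, integral_exp_quad_one ha',
    show (0:ℝ)^2/(2*a') = 0 by ring, Real.exp_zero, mul_one,
    ← Real.sqrt_mul (by positivity)]
  have h14 : 0 < 1+4*σ*lam := by positivity
  have haa' : 2*π/a * (2*π/a') = (2*π*lam)^2/(1+4*σ*lam) := by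
    have h : a * a' = (1+4*σ*lam)/lam^2 := by
      rw [ha'_def, ha_def]; field_simp; ring
    rw [div_mul_div_comm, h]
    field_simp
  rw [haa', Real.sqrt_div (sq_nonneg _), Real.sqrt_sq (by positivity)]

/-- `∫∫ exp(−σ‖x−y‖²) dN(m,Σ)(x) dN(m,Σ)(y) = det(I + 4σΣ)^{−1/2}`. -/
theorem gaussian_kernel_double_integral {d : ℕ} (hd : 1 ≤ d) (σ : ℝ) (hσ : 0 < σ)
    (m : Fin d → ℝ) (S : Matrix (Fin d) (Fin d) ℝ) (hS : S.PosDef) :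
    ∫ y, (∫ x, Real.exp (-σ * ((x - y) ⬝ᵥ (x - y))) ∂(gaussN m S)) ∂(gaussN m S) =
      ((1 : Matrix (Fin d) (Fin d) ℝ) + (4 * σ) • S).det ^ (-(1 : ℝ) / 2) := by
  classical
  have hH : S.IsHermitian := hS.isHermitian
  set V : Matrix (Fin d) (Fin d) ℝ := (hH.eigenvectorUnitary : Matrix (Fin d) (Fin d) ℝ) with hV
  set lam : Fin d → ℝ := hH.eigenvalues with hlam
  have hlam_pos : ∀ i, 0 < lam i := fun i => hS.eigenvalues_pos i
  have hspec : S = V * diagonal lam * Vᵀ := by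
    have := hH.spectral_theorem
    simpa [← Matrix.conjTranspose_eq_transpose_of_trivial, Matrix.star_eq_conjTranspose] using this
  have hVV : Vᵀ * V = 1 := by
    have h := hH.eigenvectorUnitary.2
    rw [Matrix.mem_unitaryGroup_iff'] at h
    simpa [Matrix.star_eq_conjTranspose, Matrix.conjTranspose_eq_transpose_of_trivial] using h
  have hVV' : V * Vᵀ = 1 := by
    have h := hH.eigenvectorUnitary.2
    rw [Matrix.mem_unitaryGroup_iff] at h
    simpa [Matrix.star_eq_conjTranspose, Matrix.conjTranspose_eq_transpose_of_trivial] using h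
  have hdetV2 : V.det * V.det = 1 := by
    have := congrArg Matrix.det hVV
    simpa [Matrix.det_transpose, mul_comm] using this
  have hdet1 : |V.det| = 1 := by
    rcases mul_self_eq_one_iff.mp hdetV2 with h | h <;> simp [h]
  have hdetS : S.det = ∏ i, lam i := by
    rw [hspec, Matrix.det_mul, Matrix.det_mul, Matrix.det_transpose, mul_comm,
      ← mul_assoc, mul_comm (V.det), mul_assoc,
      Matrix.det_diagonal, ← mul_assoc, hdetV2, one_mul]
  have hdetSpos : 0 < S.det := hS.det_pos
  have hDinv : (diagonal lam) * (diagonal fun i => (lam i)⁻¹) = 1 := by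
    rw [Matrix.diagonal_mul_diagonal,
      show (fun i => lam i * (lam i)⁻¹) = fun _ => (1:ℝ) from
        funext fun i => mul_inv_cancel₀ (hlam_pos i).ne']
    simp [Matrix.diagonal_one]
  have hSinv : S⁻¹ = V * (diagonal fun i => (lam i)⁻¹) * Vᵀ := by
    apply Matrix.inv_eq_right_inv
    rw [hspec]
    calc V * diagonal lam * Vᵀ * (V * (diagonal fun i => (lam i)⁻¹) * Vᵀ)
        = V * (diagonal lam * ((Vᵀ * V) * ((diagonal fun i => (lam i)⁻¹) * Vᵀ))) := by
          simp only [Matrix.mul_assoc]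
      _ = V * ((diagonal lam * (diagonal fun i => (lam i)⁻¹)) * Vᵀ) := by
          rw [hVV, one_mul, Matrix.mul_assoc]
      _ = 1 := by rw [hDinv, one_mul, hVV']
  have hDlam : Vᵀ * (S⁻¹ * V) = diagonal fun i => (lam i)⁻¹ := by
    rw [hSinv]
    calc Vᵀ * (V * (diagonal fun i => (lam i)⁻¹) * Vᵀ * V)
        = (Vᵀ * V) * ((diagonal fun i => (lam i)⁻¹) * (Vᵀ * V)) := by
          simp only [Matrix.mul_assoc]
      _ = _ := by rw [hVV, one_mul, mul_one]
  have hquad : ∀ v : Fin d → ℝ,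
      (V *ᵥ v) ⬝ᵥ (S⁻¹ *ᵥ (V *ᵥ v)) = ∑ i, (lam i)⁻¹ * (v i)^2 := by
    intro v
    calc (V *ᵥ v) ⬝ᵥ (S⁻¹ *ᵥ (V *ᵥ v))
        = (V *ᵥ v) ⬝ᵥ ((S⁻¹ * V) *ᵥ v) := by rw [Matrix.mulVec_mulVec]
      _ = ((V *ᵥ v) ᵥ* (S⁻¹ * V)) ⬝ᵥ v := Matrix.dotProduct_mulVec _ _ _
      _ = ((v ᵥ* Vᵀ) ᵥ* (S⁻¹ * V)) ⬝ᵥ v := by rw [Matrix.vecMul_transpose]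
      _ = (v ᵥ* (Vᵀ * (S⁻¹ * V))) ⬝ᵥ v := by rw [Matrix.vecMul_vecMul]
      _ = (v ᵥ* diagonal fun i => (lam i)⁻¹) ⬝ᵥ v := by rw [hDlam]
      _ = ∑ i, (lam i)⁻¹ * (v i)^2 := by
          simp only [dotProduct, Matrix.vecMul_diagonal]
          exact Finset.sum_congr rfl fun i _ => by ring
  have hnorm : ∀ z : Fin d → ℝ, (V *ᵥ z) ⬝ᵥ (V *ᵥ z) = ∑ i, (z i)^2 := by
    intro z
    calc (V *ᵥ z) ⬝ᵥ (V *ᵥ z)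
        = ((V *ᵥ z) ᵥ* V) ⬝ᵥ z := Matrix.dotProduct_mulVec _ _ _
      _ = ((z ᵥ* Vᵀ) ᵥ* V) ⬝ᵥ z := by rw [Matrix.vecMul_transpose]
      _ = (z ᵥ* (Vᵀ * V)) ⬝ᵥ z := by rw [Matrix.vecMul_vecMul]
      _ = ∑ i, (z i)^2 := by
          rw [hVV, Matrix.vecMul_one]
          simp [dotProduct, sq]
  set K : ℝ := (2 * π) ^ (-(d : ℝ) / 2) * S.det ^ (-(1 : ℝ) / 2) with hK
  have hKpos : 0 < K :=
    mul_pos (Real.rpow_pos_of_pos (by positivity) _) (Real.rpow_pos_of_pos hdetSpos _)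
  -- conversion of gaussN-integrals to Lebesgue integrals
  have hcont : Continuous fun z : Fin d → ℝ =>
      K * Real.exp (-((z - m) ⬝ᵥ (S⁻¹ *ᵥ (z - m))) / 2) := by
    have h1 : Continuous fun z : Fin d → ℝ => (z - m) ⬝ᵥ (S⁻¹ *ᵥ (z - m)) := by
      simp only [dotProduct, Matrix.mulVec]
      refine continuous_finset_sum _ fun i _ => ?_
      refine Continuous.mul ?_ ?_
      · exact (continuous_apply i).sub continuous_const
      · refine continuous_finset_sum _ fun j _ => ?_
        exact continuous_const.mul ((continuous_apply j).sub continuous_const)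
    fun_prop
  have hmeasρ : Measurable fun z : Fin d → ℝ =>
      Real.toNNReal (K * Real.exp (-((z - m) ⬝ᵥ (S⁻¹ *ᵥ (z - m))) / 2)) :=
    hcont.measurable.real_toNNReal
  have hconv : ∀ g : (Fin d → ℝ) → ℝ, (∫ z, g z ∂(gaussN m S)) =
      ∫ z, (K * Real.exp (-((z - m) ⬝ᵥ (S⁻¹ *ᵥ (z - m))) / 2)) * g z := by
    intro g
    rw [gaussN]
    rw [show (fun x : Fin d → ℝ => ENNReal.ofReal ((2 * π) ^ (-(d : ℝ) / 2) *
            S.det ^ (-(1 : ℝ) / 2) * Real.exp (-((x - m) ⬝ᵥ (S⁻¹ *ᵥ (x - m))) / 2))) =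
          fun x : Fin d → ℝ => ((Real.toNNReal
            (K * Real.exp (-((x - m) ⬝ᵥ (S⁻¹ *ᵥ (x - m))) / 2)) : ℝ≥0) : ℝ≥0∞) from rfl]
    rw [integral_withDensity_eq_integral_smul hmeasρ]
    refine integral_congr_ae (Filter.Eventually.of_forall fun z => ?_)
    show (Real.toNNReal (K * Real.exp (-((z - m) ⬝ᵥ (S⁻¹ *ᵥ (z - m))) / 2))) • g z = _
    rw [NNReal.smul_def, Real.coe_toNNReal _ (by positivity), smul_eq_mul]
  -- Step 1: unfold both densities
  have step1 : (∫ y, (∫ x, Real.exp (-σ * ((x - y) ⬝ᵥ (x - y))) ∂(gaussN m S)) ∂(gaussN m S)) =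
      ∫ y, (K * Real.exp (-((y - m) ⬝ᵥ (S⁻¹ *ᵥ (y - m))) / 2)) *
        ∫ x, (K * Real.exp (-((x - m) ⬝ᵥ (S⁻¹ *ᵥ (x - m))) / 2)) *
          Real.exp (-σ * ((x - y) ⬝ᵥ (x - y))) := by
    rw [hconv]
    refine integral_congr_ae (Filter.Eventually.of_forall fun y => ?_)
    dsimp only
    congr 1
    exact hconv _
  -- Step 2: translate the inner variable by m
  have step2 : ∀ y : Fin d → ℝ,
      (∫ x, (K * Real.exp (-((x - m) ⬝ᵥ (S⁻¹ *ᵥ (x - m))) / 2)) *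
          Real.exp (-σ * ((x - y) ⬝ᵥ (x - y)))) =
      ∫ x, (K * Real.exp (-(x ⬝ᵥ (S⁻¹ *ᵥ x)) / 2)) *
          Real.exp (-σ * ((x + m - y) ⬝ᵥ (x + m - y))) := by
    intro y
    rw [← integral_add_right_eq_self (fun x => (K *
      Real.exp (-((x - m) ⬝ᵥ (S⁻¹ *ᵥ (x - m))) / 2)) *
      Real.exp (-σ * ((x - y) ⬝ᵥ (x - y)))) m]
    simp only [add_sub_cancel_right]
  -- Step 3: translate the outer variable by m
  have step3 :
      (∫ y, (K * Real.exp (-((y - m) ⬝ᵥ (S⁻¹ *ᵥ (y - m))) / 2)) *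
        ∫ x, (K * Real.exp (-(x ⬝ᵥ (S⁻¹ *ᵥ x)) / 2)) *
          Real.exp (-σ * ((x + m - y) ⬝ᵥ (x + m - y)))) =
      ∫ y, (K * Real.exp (-(y ⬝ᵥ (S⁻¹ *ᵥ y)) / 2)) *
        ∫ x, (K * Real.exp (-(x ⬝ᵥ (S⁻¹ *ᵥ x)) / 2)) *
          Real.exp (-σ * ((x - y) ⬝ᵥ (x - y))) := by
    rw [← integral_add_right_eq_self (fun y => (K *
      Real.exp (-((y - m) ⬝ᵥ (S⁻¹ *ᵥ (y - m))) / 2)) *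
      ∫ x, (K * Real.exp (-(x ⬝ᵥ (S⁻¹ *ᵥ x)) / 2)) *
        Real.exp (-σ * ((x + m - y) ⬝ᵥ (x + m - y)))) m]
    simp only [add_sub_cancel_right, add_sub_add_right_eq_sub]
  -- pointwise product expansions
  have hexpand : ∀ v : Fin d → ℝ, Real.exp (-((V *ᵥ v) ⬝ᵥ (S⁻¹ *ᵥ (V *ᵥ v))) / 2) =
      ∏ i, Real.exp (-(v i^2)/(2*lam i)) := by
    intro v
    rw [hquad, ← Real.exp_sum]
    congr 1
    rw [neg_div, Finset.sum_div, ← Finset.sum_neg_distrib]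
    exact Finset.sum_congr rfl fun i _ => by
      rw [neg_div]
      congr 1
      field_simp
  -- Step 5: the inner integral, after rotating by V
  have step5 : ∀ w : Fin d → ℝ,
      (∫ x, (K * Real.exp (-(x ⬝ᵥ (S⁻¹ *ᵥ x)) / 2)) *
          Real.exp (-σ * ((x - V *ᵥ w) ⬝ᵥ (x - V *ᵥ w)))) =
      K * ∏ i, ∫ u : ℝ, Real.exp (-(u^2)/(2*lam i)) * Real.exp (-σ*(u - w i)^2) := by
    intro w
    rw [integral_comp_mulVec V hdet1]
    have hpt : ∀ u : Fin d → ℝ,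
        (K * Real.exp (-((V *ᵥ u) ⬝ᵥ (S⁻¹ *ᵥ (V *ᵥ u))) / 2)) *
          Real.exp (-σ * ((V *ᵥ u - V *ᵥ w) ⬝ᵥ (V *ᵥ u - V *ᵥ w))) =
        K * ∏ i, (Real.exp (-(u i^2)/(2*lam i)) * Real.exp (-σ*(u i - w i)^2)) := by
      intro u
      rw [← Matrix.mulVec_sub, hexpand, hnorm, mul_assoc]
      congr 1
      rw [Finset.prod_mul_distrib]
      congr 1
      rw [← Real.exp_sum]
      congr 1
      rw [Finset.mul_sum]
      exact Finset.sum_congr rfl fun i _ => by simp [Pi.sub_apply]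
    simp_rw [hpt]
    rw [integral_const_mul,
      integral_fintype_prod_volume_eq_prod (f := fun i t =>
        Real.exp (-(t^2)/(2*lam i)) * Real.exp (-σ*(t - w i)^2))]
  -- Step 6: the outer integral, after rotating by V
  have step6 :
      (∫ w, (K * Real.exp (-((V *ᵥ w) ⬝ᵥ (S⁻¹ *ᵥ (V *ᵥ w))) / 2)) *
        (K * ∏ i, ∫ u : ℝ, Real.exp (-(u^2)/(2*lam i)) * Real.exp (-σ*(u - w i)^2))) =
      K * K * ∏ i, (2*π*lam i / Real.sqrt (1+4*σ*lam i)) := by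
    have hpt2 : ∀ w : Fin d → ℝ,
        (K * Real.exp (-((V *ᵥ w) ⬝ᵥ (S⁻¹ *ᵥ (V *ᵥ w))) / 2)) *
          (K * ∏ i, ∫ u : ℝ, Real.exp (-(u^2)/(2*lam i)) * Real.exp (-σ*(u - w i)^2)) =
        (K * K) * ∏ i, (Real.exp (-(w i^2)/(2*lam i)) *
          ∫ u : ℝ, Real.exp (-(u^2)/(2*lam i)) * Real.exp (-σ*(u - w i)^2)) := by
      intro w
      rw [hexpand, Finset.prod_mul_distrib]
      ring
    simp_rw [hpt2]
    rw [integral_const_mul,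
      integral_fintype_prod_volume_eq_prod (f := fun i t => Real.exp (-(t^2)/(2*lam i)) *
        ∫ u : ℝ, Real.exp (-(u^2)/(2*lam i)) * Real.exp (-σ*(u - t)^2))]
    congr 1
    exact Finset.prod_congr rfl fun i _ => one_dim (hlam_pos i) hσ
  -- Step 7: final arithmetic
  have hdet4 : ((1 : Matrix (Fin d) (Fin d) ℝ) + (4 * σ) • S).det = ∏ i, (1+4*σ*lam i) := by
    have hM : (1 : Matrix (Fin d) (Fin d) ℝ) + (4 * σ) • S =
        V * diagonal (fun i => 1+4*σ*lam i) * Vᵀ := by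
      calc (1 : Matrix (Fin d) (Fin d) ℝ) + (4 * σ) • S
          = V * 1 * Vᵀ + V * ((4*σ) • diagonal lam) * Vᵀ := by
            rw [Matrix.mul_one, hVV', hspec, Matrix.mul_smul, Matrix.smul_mul]
        _ = V * (1 + (4*σ) • diagonal lam) * Vᵀ := by
            rw [Matrix.mul_add, Matrix.add_mul]
        _ = V * diagonal (fun i => 1+4*σ*lam i) * Vᵀ := by
            have h1 : (1 : Matrix (Fin d) (Fin d) ℝ) + (4*σ) • diagonal lam =
                diagonal (fun i => 1+4*σ*lam i) := by
              rw [← Matrix.diagonal_one, ← Matrix.diagonal_smul, Matrix.diagonal_add]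
              simp [Pi.smul_apply, smul_eq_mul]
            rw [h1]
    rw [hM, Matrix.det_mul, Matrix.det_mul, Matrix.det_transpose, mul_comm,
      ← mul_assoc, mul_comm (V.det), mul_assoc, Matrix.det_diagonal,
      ← mul_assoc, hdetV2, one_mul]
  have hprodpos : 0 < ∏ i, (1+4*σ*lam i) :=
    Finset.prod_pos fun i _ => by nlinarith [hlam_pos i]
  have h2π : (0:ℝ) < 2*π := by positivity
  have hKK : K * K = ((2*π)^(d:ℕ))⁻¹ * (S.det)⁻¹ := by
    rw [hK, mul_mul_mul_comm, ← Real.rpow_add h2π, ← Real.rpow_add hdetSpos,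
      show (-(d:ℝ)/2 + -(d:ℝ)/2) = -(d:ℝ) by ring,
      show (-(1:ℝ)/2 + -(1:ℝ)/2) = -(1:ℝ) by ring,
      Real.rpow_neg h2π.le, Real.rpow_natCast, Real.rpow_neg_one]
  have step7 : K * K * ∏ i, (2*π*lam i / Real.sqrt (1+4*σ*lam i)) =
      ((1 : Matrix (Fin d) (Fin d) ℝ) + (4 * σ) • S).det ^ (-(1 : ℝ) / 2) := by
    rw [hdet4, show (-(1:ℝ)/2) = -((1:ℝ)/2) by norm_num,
      Real.rpow_neg hprodpos.le, ← Real.sqrt_eq_rpow]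
    rw [hKK, Finset.prod_div_distrib, Finset.prod_mul_distrib, Finset.prod_const,
      Finset.card_univ, Fintype.card_fin,
      finset_prod_sqrt _ _ (fun i _ => by nlinarith [hlam_pos i]), ← hdetS]
    have hsq : 0 < Real.sqrt (∏ i, (1+4*σ*lam i)) := Real.sqrt_pos.mpr hprodpos
    field_simp
  -- Put everything together
  calc (∫ y, (∫ x, Real.exp (-σ * ((x - y) ⬝ᵥ (x - y))) ∂(gaussN m S)) ∂(gaussN m S))
      = ∫ y, (K * Real.exp (-((y - m) ⬝ᵥ (S⁻¹ *ᵥ (y - m))) / 2)) *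
          ∫ x, (K * Real.exp (-((x - m) ⬝ᵥ (S⁻¹ *ᵥ (x - m))) / 2)) *
            Real.exp (-σ * ((x - y) ⬝ᵥ (x - y))) := step1
    _ = ∫ y, (K * Real.exp (-((y - m) ⬝ᵥ (S⁻¹ *ᵥ (y - m))) / 2)) *
          ∫ x, (K * Real.exp (-(x ⬝ᵥ (S⁻¹ *ᵥ x)) / 2)) *
            Real.exp (-σ * ((x + m - y) ⬝ᵥ (x + m - y))) := by
        refine integral_congr_ae (Filter.Eventually.of_forall fun y => ?_)
        dsimp only
        rw [step2 y]
    _ = ∫ y, (K * Real.exp (-(y ⬝ᵥ (S⁻¹ *ᵥ y)) / 2)) *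
          ∫ x, (K * Real.exp (-(x ⬝ᵥ (S⁻¹ *ᵥ x)) / 2)) *
            Real.exp (-σ * ((x - y) ⬝ᵥ (x - y))) := step3
    _ = ∫ w, (K * Real.exp (-((V *ᵥ w) ⬝ᵥ (S⁻¹ *ᵥ (V *ᵥ w))) / 2)) *
          ∫ x, (K * Real.exp (-(x ⬝ᵥ (S⁻¹ *ᵥ x)) / 2)) *
            Real.exp (-σ * ((x - V *ᵥ w) ⬝ᵥ (x - V *ᵥ w))) :=
        integral_comp_mulVec V hdet1 (fun y => (K * Real.exp (-(y ⬝ᵥ (S⁻¹ *ᵥ y)) / 2)) *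
          ∫ x, (K * Real.exp (-(x ⬝ᵥ (S⁻¹ *ᵥ x)) / 2)) *
            Real.exp (-σ * ((x - y) ⬝ᵥ (x - y))))
    _ = ∫ w, (K * Real.exp (-((V *ᵥ w) ⬝ᵥ (S⁻¹ *ᵥ (V *ᵥ w))) / 2)) *
          (K * ∏ i, ∫ u : ℝ, Real.exp (-(u^2)/(2*lam i)) * Real.exp (-σ*(u - w i)^2)) := by
        refine integral_congr_ae (Filter.Eventually.of_forall fun w => ?_)
        dsimp only
        rw [step5 w]
    _ = K * K * ∏ i, (2*π*lam i / Real.sqrt (1+4*σ*lam i)) := step6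
    _ = ((1 : Matrix (Fin d) (Fin d) ℝ) + (4 * σ) • S).det ^ (-(1 : ℝ) / 2) := step7
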